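/- arXiv:2201.12548 — 2 statements merged into one kernel-verified Lean document; each statement's English description precedes it below -/
import Mathlib

section
/- Let T(d) = d·ln(1 + ξ(d)) with ξ(d) = A·e^{-Kd}/d², A > 0, K ≥ 0, d > 0. A point d° > 0 is a stationary point of T (i.e., T'(d°) = 0) if and only if ξ° = ξ(d°) satisfies ln(1+ξ°)·(1+ξ°)/ξ° = 2 + K·d°. -/
/-!
With ξ(x) = A e^{-Kx} / x², logarithmic differentiation gives ξ'(d) = -(K + 2/d) ξ(d), so
T'(d) = ln(1 + ξ) + d ξ' / (1 + ξ) = ln(1 + ξ) - (2 + K d) ξ / (1 + ξ).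
Since ξ > 0, this vanishes exactly when ln(1 + ξ)(1 + ξ)/ξ = 2 + K d.
-/

open Real

theorem hasDerivAt_mul_exp_div_sq (A K : ℝ) {d : ℝ} (hd : d ≠ 0) :
    HasDerivAt (fun x => A * exp (-K * x) / x ^ 2)
      (-(K + 2 / d) * (A * exp (-K * d) / d ^ 2)) d := by
  have hexp : HasDerivAt (fun x => A * exp (-K * x)) (A * (exp (-K * d) * -K)) d := by
    simpa using (((hasDerivAt_id d).const_mul (-K)).exp).const_mul A
  have hsq : HasDerivAt (fun x : ℝ => x ^ 2) (2 * d) d := by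
    simpa using hasDerivAt_pow 2 d
  refine (hexp.div hsq (pow_ne_zero 2 hd)).congr_deriv ?_
  field_simp
  ring

theorem hasDerivAt_id_mul_log_one_add {f : ℝ → ℝ} {f' d : ℝ} (hf : HasDerivAt f f' d)
    (hf₁ : 1 + f d ≠ 0) :
    HasDerivAt (fun x => x * log (1 + f x)) (log (1 + f d) + d * (f' / (1 + f d))) d :=
  ((hasDerivAt_id' d).mul ((hf.const_add 1).log hf₁)).congr_deriv (by rw [one_mul])

theorem sub_mul_div_one_add_eq_zero_iff {L c s : ℝ} (hs : s ≠ 0) (hs₁ : 1 + s ≠ 0) :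
    L - c * s / (1 + s) = 0 ↔ L * (1 + s) / s = c := by
  rw [sub_eq_zero, eq_div_iff hs₁, div_eq_iff hs]

theorem stmt5_general (A K : ℝ) (hA : 0 < A)
    (ξ T : ℝ → ℝ)
    (hξ : ∀ d, ξ d = A * Real.exp (-K * d) / d ^ 2)
    (hT : ∀ d, T d = d * Real.log (1 + ξ d)) :
    ∀ d : ℝ, 0 < d →
      (deriv T d = 0 ↔ Real.log (1 + ξ d) * (1 + ξ d) / ξ d = 2 + K * d) := by
  intro d hd
  have hξ_pos : 0 < ξ d := by rw [hξ]; positivity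
  have hξ₁ : 1 + ξ d ≠ 0 := by positivity
  have hξ' : HasDerivAt ξ (-(K + 2 / d) * ξ d) d := by
    rw [funext hξ]
    exact hasDerivAt_mul_exp_div_sq A K hd.ne'
  have hT' := hasDerivAt_id_mul_log_one_add hξ' hξ₁
  rw [← funext hT] at hT'
  have hslope : d * (-(K + 2 / d) * ξ d / (1 + ξ d)) = -((2 + K * d) * ξ d / (1 + ξ d)) := by
    field_simp
    ring
  rw [hT'.deriv, hslope, ← sub_eq_add_neg, sub_mul_div_one_add_eq_zero_iff hξ_pos.ne' hξ₁]

theorem stmt5 (A K : ℝ) (hA : 0 < A) (hK : 0 ≤ K)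
    (ξ T : ℝ → ℝ)
    (hξ : ∀ d, ξ d = A * Real.exp (-K * d) / d ^ 2)
    (hT : ∀ d, T d = d * Real.log (1 + ξ d)) :
    ∀ d : ℝ, 0 < d →
      (deriv T d = 0 ↔ Real.log (1 + ξ d) * (1 + ξ d) / ξ d = 2 + K * d) :=
  stmt5_general A K hA ξ T hξ hT
end

section
/- Let T(d) = d·ln(1 + A·e^{-Kd}/d²), A > 0, K ≥ 0, on (0, ∞). There exists a unique d° > 0 such that T is strictly increasing on (0, d°) and strictly decreasing on (d°, ∞); in particular, T is strictly quasiconcave on (0, ∞) and d° is its unique global maximizer. -/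
/-!
Write g(d) = A e^{-Kd}/d² and ψ(c, u) = log(1 + u) - c u/(1 + u). Since d g'(d) = -(Kd + 2) g(d),
the derivative of T is T'(d) = ψ(Kd + 2, g(d)).

Where g(d) ≤ Kd + 1 we have T'(d) < 0, because log(1 + u) < u ≤ c u/(1 + u) for 0 < u ≤ c - 1.
On the complementary region, which is an initial segment of (0, ∞) since g decreases while Kd + 1
increases, T' is strictly decreasing: ψ(c, ·) is strictly increasing on [c - 1, ∞) and ψ(·, u)
is decreasing. As T' > 0 near 0 (where g blows up) and T' < 0 for large d, T' has a zero d°, it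
lies in that initial segment, and T' is positive before d° and negative after it.
-/

open Real Set

section Unimodal

variable {f f' : ℝ → ℝ} {c : ℝ}

theorem existsUnique_unimodal_of_hasDerivAt (hc : 0 < c)
    (hf : ∀ x, 0 < x → HasDerivAt f (f' x) x)
    (hpos : ∀ x ∈ Ioo 0 c, 0 < f' x) (hneg : ∀ x ∈ Ioi c, f' x < 0) :
    ∃! m : ℝ, 0 < m ∧ StrictMonoOn f (Ioc 0 m) ∧ StrictAntiOn f (Ici m) ∧
      ∀ d : ℝ, 0 < d → d ≠ m → f d < f m := by
  have hcont : ContinuousOn f (Ioi 0) := fun x hx => (hf x hx).continuousAt.continuousWithinAt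
  have hmono : StrictMonoOn f (Ioc 0 c) := by
    refine strictMonoOn_of_hasDerivWithinAt_pos (f' := f') (convex_Ioc 0 c)
      (hcont.mono Ioc_subset_Ioi_self) (fun x hx => ?_) (fun x hx => ?_) <;>
      rw [interior_Ioc] at hx
    exacts [(hf x hx.1).hasDerivWithinAt, hpos x hx]
  have hanti : StrictAntiOn f (Ici c) := by
    refine strictAntiOn_of_hasDerivWithinAt_neg (f' := f') (convex_Ici c)
      (hcont.mono fun x hx => hc.trans_le hx) (fun x hx => ?_) (fun x hx => ?_) <;>
      rw [interior_Ici] at hx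
    exacts [(hf x (hc.trans hx)).hasDerivWithinAt, hneg x hx]
  have hmax : ∀ d : ℝ, 0 < d → d ≠ c → f d < f c := by
    intro d hd hdc
    rcases hdc.lt_or_gt with hlt | hgt
    · exact hmono ⟨hd, hlt.le⟩ ⟨hc, le_rfl⟩ hlt
    · exact hanti self_mem_Ici hgt.le hgt
  refine ⟨c, ⟨hc, hmono, hanti, hmax⟩, fun m ⟨hm, _, _, hmaxm⟩ => ?_⟩
  by_contra hmc
  exact (hmax m hm hmc).asymm (hmaxm c hc (Ne.symm hmc))

end Unimodal

noncomputable def psi (c u : ℝ) : ℝ := log (1 + u) - c * (u / (1 + u))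

section Psi

variable {c u : ℝ}

theorem psi_strictMonoOn (hc : 0 < c) : StrictMonoOn (psi c) (Ici (c - 1)) := by
  intro x hx y _ hxy
  rw [mem_Ici] at hx
  have hx0 : 0 < 1 + x := by linarith
  have hy0 : 0 < 1 + y := by linarith
  have hlog : log (1 + x) - log (1 + y) < -((y - x) / (1 + y)) := by
    have hne : (1 + x) / (1 + y) ≠ 1 := by
      rw [Ne, div_eq_one_iff_eq hy0.ne']
      linarith
    have := log_lt_sub_one_of_pos (div_pos hx0 hy0) hne
    rw [log_div hx0.ne' hy0.ne'] at this
    convert this using 1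
    field_simp
    ring
  have hratio : c * (y / (1 + y)) - c * (x / (1 + x)) ≤ (y - x) / (1 + y) := by
    rw [show c * (y / (1 + y)) - c * (x / (1 + x)) = c * (y - x) / ((1 + y) * (1 + x)) by
        field_simp; ring, div_le_div_iff₀ (by positivity) hy0]
    have := mul_le_mul_of_nonneg_right (show c ≤ 1 + x by linarith)
      (mul_nonneg (sub_nonneg.2 hxy.le) hy0.le)
    nlinarith
  unfold psi
  linarith

theorem psi_antitone_left (hu : 0 ≤ u) : Antitone (psi · u) := by
  intro a b hab
  have : 0 ≤ u / (1 + u) := by positivity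
  simp only [psi]
  nlinarith

theorem psi_neg_of_le (hu : 0 < u) (huc : u ≤ c - 1) : psi c u < 0 := by
  have hu1 : 0 < 1 + u := by linarith
  have hlog : log (1 + u) < u := by
    linarith [log_lt_sub_one_of_pos hu1 (by linarith : 1 + u ≠ 1)]
  have : u ≤ c * (u / (1 + u)) := by
    rw [mul_div_assoc', le_div_iff₀ hu1]
    nlinarith
  unfold psi
  linarith

theorem psi_pos_of_exp_lt (hc : 0 ≤ c) (h : exp c < 1 + u) : 0 < psi c u := by
  have hu1 : 0 < 1 + u := (exp_pos c).trans h
  have hlog : c < log (1 + u) := (lt_log_iff_exp_lt hu1).2 h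
  have : c * (u / (1 + u)) ≤ c :=
    mul_le_of_le_one_right hc ((div_le_one hu1).2 (by linarith))
  unfold psi
  linarith

end Psi

noncomputable def snr (A K d : ℝ) : ℝ := A * exp (-K * d) / d ^ 2

noncomputable def transportDeriv (A K d : ℝ) : ℝ := psi (K * d + 2) (snr A K d)

section Transport

variable {A K d d' : ℝ}

theorem snr_pos (hA : 0 < A) (hd : 0 < d) : 0 < snr A K d := by
  unfold snr
  positivity

theorem snr_strictAntiOn (hA : 0 < A) (hK : 0 ≤ K) : StrictAntiOn (snr A K) (Ioi 0) := by
  intro d (hd : 0 < d) d' _ hdd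
  have hexp : exp (-K * d') ≤ exp (-K * d) := exp_le_exp.2 (by nlinarith)
  calc A * exp (-K * d') / d' ^ 2 ≤ A * exp (-K * d) / d' ^ 2 := by gcongr
    _ < A * exp (-K * d) / d ^ 2 := by gcongr

theorem hasDerivAt_snr (hd : d ≠ 0) : HasDerivAt (snr A K) (-(K * d + 2) * snr A K d / d) d := by
  refine ((((hasDerivAt_id d).const_mul (-K)).exp.const_mul A).div (hasDerivAt_pow 2 d)
    (pow_ne_zero 2 hd)).congr_deriv ?_
  simp only [snr, id]
  field_simp
  ring

theorem hasDerivAt_transport (hA : 0 < A) (hd : 0 < d) :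
    HasDerivAt (fun x => x * log (1 + A * exp (-K * x) / x ^ 2)) (transportDeriv A K d) d := by
  have h1 : 1 + snr A K d ≠ 0 := (add_pos one_pos (snr_pos hA hd)).ne'
  refine ((hasDerivAt_id d).mul (((hasDerivAt_snr hd.ne').const_add 1).log h1)).congr_deriv ?_
  simp only [transportDeriv, psi, id]
  field_simp
  ring

theorem continuousOn_transportDeriv (hA : 0 < A) : ContinuousOn (transportDeriv A K) (Ioi 0) := by
  intro d hd
  have hg : ContinuousAt (snr A K) d := (hasDerivAt_snr (ne_of_gt hd)).continuousAt
  have h1 : 1 + snr A K d ≠ 0 := (add_pos one_pos (snr_pos hA hd)).ne'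
  show ContinuousWithinAt
    (fun x => log (1 + snr A K x) - (K * x + 2) * (snr A K x / (1 + snr A K x))) _ d
  exact ContinuousAt.continuousWithinAt (by fun_prop (disch := assumption))

theorem transportDeriv_neg_of_snr_le (hA : 0 < A) (hd : 0 < d) (h : snr A K d ≤ K * d + 1) :
    transportDeriv A K d < 0 :=
  psi_neg_of_le (snr_pos hA hd) (by linarith)

theorem transportDeriv_lt_of_le_snr (hA : 0 < A) (hK : 0 ≤ K) (hd : 0 < d) (hdd' : d < d')
    (h : K * d' + 1 ≤ snr A K d') : transportDeriv A K d' < transportDeriv A K d := by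
  have hg : snr A K d' < snr A K d := snr_strictAntiOn hA hK hd (hd.trans hdd') hdd'
  have hKd : K * d ≤ K * d' := mul_le_mul_of_nonneg_left hdd'.le hK
  calc psi (K * d' + 2) (snr A K d')
      ≤ psi (K * d + 2) (snr A K d') :=
        psi_antitone_left (snr_pos hA (hd.trans hdd')).le (by linarith)
    _ < psi (K * d + 2) (snr A K d) :=
        psi_strictMonoOn (by positivity) (by rw [mem_Ici]; linarith)
          (by rw [mem_Ici]; linarith) hg

theorem exists_transportDeriv_pos (hA : 0 < A) (hK : 0 ≤ K) :
    ∃ δ, 0 < δ ∧ 0 < transportDeriv A K δ := by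
  set δ := min 1 (√(A * exp (-K) / exp (K + 2)))
  have hδ : 0 < δ := lt_min one_pos (sqrt_pos.2 (by positivity))
  have hδ1 : δ ≤ 1 := min_le_left _ _
  have hδsq : δ ^ 2 ≤ A * exp (-K) / exp (K + 2) := by
    calc δ ^ 2 ≤ √(A * exp (-K) / exp (K + 2)) ^ 2 := by gcongr; exact min_le_right _ _
      _ = A * exp (-K) / exp (K + 2) := sq_sqrt (by positivity)
  have hsnr : exp (K + 2) ≤ snr A K δ := by
    calc exp (K + 2) ≤ A * exp (-K) / δ ^ 2 := by
          rw [le_div_iff₀ (by positivity)]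
          rwa [le_div_iff₀ (by positivity), mul_comm] at hδsq
      _ ≤ A * exp (-K * δ) / δ ^ 2 := by
          have : exp (-K) ≤ exp (-K * δ) := exp_le_exp.2 (by nlinarith)
          gcongr
  refine ⟨δ, hδ, psi_pos_of_exp_lt (by positivity) ?_⟩
  calc exp (K * δ + 2) ≤ exp (K + 2) := exp_le_exp.2 (by nlinarith)
    _ < 1 + snr A K δ := by linarith

theorem exists_transportDeriv_neg (hA : 0 < A) (hK : 0 ≤ K) :
    ∃ β, 0 < β ∧ transportDeriv A K β < 0 := by
  set β := √A + 1
  have hβ : 0 < β := by positivity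
  refine ⟨β, hβ, transportDeriv_neg_of_snr_le hA hβ ?_⟩
  have hAβ : A < β ^ 2 := by nlinarith [sq_sqrt hA.le, sqrt_nonneg A]
  have hexp : exp (-K * β) ≤ 1 := exp_le_one_iff.2 (by nlinarith)
  calc snr A K β ≤ A / β ^ 2 := by
        unfold snr
        gcongr
        nlinarith
    _ ≤ 1 := (div_le_one (by positivity)).2 hAβ.le
    _ ≤ K * β + 1 := by nlinarith

theorem exists_transportDeriv_eq_zero (hA : 0 < A) (hK : 0 ≤ K) :
    ∃ c, 0 < c ∧ transportDeriv A K c = 0 := by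
  obtain ⟨δ, hδ, hδpos⟩ := exists_transportDeriv_pos hA hK
  obtain ⟨β, hβ, hβneg⟩ := exists_transportDeriv_neg hA hK
  have hsub : uIcc δ β ⊆ Ioi 0 := fun x hx => lt_of_lt_of_le (lt_min hδ hβ) hx.1
  obtain ⟨c, hc, hc0⟩ := intermediate_value_uIcc ((continuousOn_transportDeriv hA).mono hsub)
    (mem_uIcc.2 (Or.inr ⟨hβneg.le, hδpos.le⟩) : (0 : ℝ) ∈ uIcc _ _)
  exact ⟨c, hsub hc, hc0⟩

theorem transportDeriv_sign (hA : 0 < A) (hK : 0 ≤ K) {c : ℝ} (hc : 0 < c)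
    (hc0 : transportDeriv A K c = 0) :
    (∀ x ∈ Ioo 0 c, 0 < transportDeriv A K x) ∧
      ∀ x ∈ Ioi c, transportDeriv A K x < 0 := by
  have hsnr : K * c + 1 ≤ snr A K c := by
    by_contra! h
    exact (transportDeriv_neg_of_snr_le hA hc h.le).ne hc0
  refine ⟨fun x hx => hc0 ▸ transportDeriv_lt_of_le_snr hA hK hx.1 hx.2 hsnr, fun x hx => ?_⟩
  rcases le_or_gt (snr A K x) (K * x + 1) with h | h
  · exact transportDeriv_neg_of_snr_le hA (hc.trans hx) h
  · exact hc0 ▸ transportDeriv_lt_of_le_snr hA hK hc hx h.le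

end Transport

theorem stmt7 (A K : ℝ) (hA : 0 < A) (hK : 0 ≤ K)
    (T : ℝ → ℝ)
    (hT : ∀ d, T d = d * Real.log (1 + A * Real.exp (-K * d) / d ^ 2)) :
    ∃! dopt : ℝ, 0 < dopt ∧
      StrictMonoOn T (Set.Ioc 0 dopt) ∧
      StrictAntiOn T (Set.Ici dopt) ∧
      ∀ d : ℝ, 0 < d → d ≠ dopt → T d < T dopt := by
  obtain rfl : T = fun d => d * Real.log (1 + A * Real.exp (-K * d) / d ^ 2) := funext hT
  obtain ⟨c, hc, hc0⟩ := exists_transportDeriv_eq_zero hA hK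
  obtain ⟨hpos, hneg⟩ := transportDeriv_sign hA hK hc hc0
  exact existsUnique_unimodal_of_hasDerivAt hc (fun x hx => hasDerivAt_transport hA hx) hpos hneg
end
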